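/- arXiv:2007.12114 — 4 statements merged into one kernel-verified Lean document; each statement's English description precedes it below -/
import Mathlib

section
/- Let p > 2, a ∈ (0, 1/2), t > 0, and let v ∈ C²((0,a)) satisfy -v''(x) ≥ |v'(x)|^p for all x ∈ (0,a). Then v'(x) ≤ U*'(x) = ((p-1)x)^{-1/(p-1)} for all x ∈ (0,a). -/
/-!
Where `v' > 0`, the inequality `-v'' ≥ (v')^p` says exactly that `(v')^{1-p}` grows at least
with slope `p - 1`, which is the slope of `(U*')^{1-p} = (p-1)x`. Integrating from `x` to `x₀`
and dropping the nonnegative value at `x → 0⁺` gives `(v' x₀)^{1-p} ≥ (p-1)x₀`; since `v'` is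
decreasing, a point with `v' x₀ > 0` has `v' > 0` on all of `(0, x₀]`.
-/

open Set Filter Topology

lemma monotoneOn_of_hasDerivAt_nonneg {s : Set ℝ} (hs : Convex ℝ s) {f f' : ℝ → ℝ}
    (hf : ∀ x ∈ s, HasDerivAt f (f' x) x) (hf'₀ : ∀ x ∈ s, 0 ≤ f' x) : MonotoneOn f s :=
  monotoneOn_of_hasDerivWithinAt_nonneg hs (fun x hx => (hf x hx).continuousAt.continuousWithinAt)
    (fun x hx => (hf x (interior_subset hx)).hasDerivWithinAt)
    (fun x hx => hf'₀ x (interior_subset hx))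

lemma antitoneOn_of_hasDerivAt_nonpos {s : Set ℝ} (hs : Convex ℝ s) {f f' : ℝ → ℝ}
    (hf : ∀ x ∈ s, HasDerivAt f (f' x) x) (hf'₀ : ∀ x ∈ s, f' x ≤ 0) : AntitoneOn f s :=
  antitoneOn_of_hasDerivWithinAt_nonpos hs (fun x hx => (hf x hx).continuousAt.continuousWithinAt)
    (fun x hx => (hf x (interior_subset hx)).hasDerivWithinAt)
    (fun x hx => hf'₀ x (interior_subset hx))

section Riccati

variable {p : ℝ} {w w' : ℝ → ℝ}

lemma monotoneOn_rpow_one_sub_sub_mul {s : Set ℝ} (hs : Convex ℝ s) (hp : 1 < p)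
    (hw : ∀ x ∈ s, HasDerivAt w (w' x) x) (hpos : ∀ x ∈ s, 0 < w x)
    (hineq : ∀ x ∈ s, w x ^ p ≤ -w' x) :
    MonotoneOn (fun x => w x ^ (1 - p) - (p - 1) * x) s := by
  refine monotoneOn_of_hasDerivAt_nonneg hs
    (fun x hx => ((hw x hx).rpow_const (Or.inl (hpos x hx).ne')).sub
      ((hasDerivAt_id x).const_mul (p - 1))) fun x hx => ?_
  have hcancel : w x ^ p * w x ^ (1 - p - 1) = 1 := by
    rw [← Real.rpow_add (hpos x hx)]; simp
  have hscaled : w x ^ p * w x ^ (1 - p - 1) ≤ -w' x * w x ^ (1 - p - 1) :=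
    mul_le_mul_of_nonneg_right (hineq x hx) (Real.rpow_nonneg (hpos x hx).le _)
  simp only [mul_one]
  nlinarith

lemma mul_le_rpow_one_sub {x₀ : ℝ} (hp : 1 < p) (hx₀ : 0 < x₀)
    (hw : ∀ x ∈ Ioc 0 x₀, HasDerivAt w (w' x) x) (hpos : ∀ x ∈ Ioc 0 x₀, 0 < w x)
    (hineq : ∀ x ∈ Ioc 0 x₀, w x ^ p ≤ -w' x) :
    (p - 1) * x₀ ≤ w x₀ ^ (1 - p) := by
  have hmono := monotoneOn_rpow_one_sub_sub_mul (convex_Ioc 0 x₀) hp hw hpos hineq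
  have hbound : ∀ x ∈ Ioo 0 x₀, (p - 1) * (x₀ - x) ≤ w x₀ ^ (1 - p) := fun x hx => by
    have hle := hmono (Ioo_subset_Ioc_self hx) (right_mem_Ioc.2 hx₀) hx.2.le
    have hnonneg : 0 ≤ w x ^ (1 - p) := Real.rpow_nonneg (hpos x (Ioo_subset_Ioc_self hx)).le _
    simp only at hle
    linarith
  have hlim : Tendsto (fun x => (p - 1) * (x₀ - x)) (𝓝[>] 0) (𝓝 ((p - 1) * x₀)) := by
    refine ((by fun_prop : Continuous fun x : ℝ => (p - 1) * (x₀ - x)).tendsto' 0 _ ?_).mono_left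
      nhdsWithin_le_nhds
    simp
  exact le_of_tendsto hlim (eventually_of_mem (Ioo_mem_nhdsGT hx₀) hbound)

end Riccati

theorem deriv_le_singular_profile_general (p a : ℝ) (hp : 2 < p)
    (v' v'' : ℝ → ℝ)
    (hv' : ∀ x ∈ Set.Ioo (0:ℝ) a, HasDerivAt v' (v'' x) x)
    (hineq : ∀ x ∈ Set.Ioo (0:ℝ) a, |v' x| ^ p ≤ -v'' x) :
    ∀ x ∈ Set.Ioo (0:ℝ) a, v' x ≤ ((p - 1) * x) ^ (-(1 / (p - 1))) := by
  intro x₀ hx₀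
  have hbase : 0 < (p - 1) * x₀ := mul_pos (by linarith) hx₀.1
  rcases le_or_gt (v' x₀) 0 with hnonpos | hpos₀
  · exact hnonpos.trans (Real.rpow_nonneg hbase.le _)
  have hanti : AntitoneOn v' (Ioo 0 a) := antitoneOn_of_hasDerivAt_nonpos (convex_Ioo 0 a) hv'
    fun x hx => by linarith [hineq x hx, Real.rpow_nonneg (abs_nonneg (v' x)) p]
  have hsub : Ioc 0 x₀ ⊆ Ioo 0 a := Ioc_subset_Ioo_right hx₀.2
  have hpos : ∀ x ∈ Ioc 0 x₀, 0 < v' x := fun x hx => hpos₀.trans_le (hanti (hsub hx) hx₀ hx.2)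
  have hkey : (p - 1) * x₀ ≤ v' x₀ ^ (1 - p) :=
    mul_le_rpow_one_sub (by linarith) hx₀.1 (fun x hx => hv' x (hsub hx)) hpos
      fun x hx => by simpa only [abs_of_pos (hpos x hx)] using hineq x (hsub hx)
  rw [one_div, ← inv_neg, neg_sub, Real.le_rpow_inv_iff_of_neg hpos₀ hbase (by linarith)]
  exact hkey

/-- If `v` is `C²` on `(0,a)` with `-v'' ≥ |v'|^p`, then `v' ≤ U*' = ((p-1)x)^{-1/(p-1)}`
on `(0,a)`. -/
theorem deriv_le_singular_profile (p a : ℝ) (hp : 2 < p) (ha : a ∈ Set.Ioo (0:ℝ) (1/2))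
    (t : ℝ) (ht : 0 < t)
    (v v' v'' : ℝ → ℝ)
    (hv : ∀ x ∈ Set.Ioo (0:ℝ) a, HasDerivAt v (v' x) x)
    (hv' : ∀ x ∈ Set.Ioo (0:ℝ) a, HasDerivAt v' (v'' x) x)
    (hineq : ∀ x ∈ Set.Ioo (0:ℝ) a, |v' x| ^ p ≤ -v'' x) :
    ∀ x ∈ Set.Ioo (0:ℝ) a, v' x ≤ ((p - 1) * x) ^ (-(1 / (p - 1))) :=
  deriv_le_singular_profile_general p a hp v' v'' hv' hineq
end

section
/- Let p > 2, a ∈ (0, 1/2), and let v ∈ C²((0,a)) satisfy -v''(x) ≤ (v'(x))^p wherever v'(x) > 0, and suppose lim_{y→0⁺} v'(y) = +∞. Then v'(x) ≥ U*'(x) = ((p-1)x)^{-1/(p-1)} for all x ∈ (0,a). -/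
/-!
Where `v' > 0`, the inequality `-v'' ≤ (v')^p` says exactly that `(p - 1) x - (v')^(1-p)`
is nondecreasing; since `v' → ∞` this function tends to `0` at `0⁺`, so it is nonnegative,
which is `v' ≥ U*'`. This holds on every initial interval `(0, z)` on which `v' > 0`; as
`U*'(z) > 0`, continuity rules out a first point `z` where `v' ≤ 0`.
-/

open Set Filter Topology

theorem rpow_neg_inv_le_of_rpow_neg_le {q y c : ℝ} (hq : 0 < q) (hy : 0 < y)
    (h : y ^ (-q) ≤ c) : c ^ (-(1 / q)) ≤ y := calc
  c ^ (-(1 / q)) ≤ (y ^ (-q)) ^ (-(1 / q)) :=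
    Real.rpow_le_rpow_of_nonpos (by positivity) h (by simp [hq.le])
  _ = y := by rw [← Real.rpow_mul hy.le, neg_mul_neg, mul_one_div_cancel hq.ne', Real.rpow_one]

theorem MonotoneOn.le_of_tendsto_nhdsGT {f : ℝ → ℝ} {a b c x : ℝ}
    (hf : MonotoneOn f (Ioo a b)) (hc : Tendsto f (𝓝[>] a) (𝓝 c)) (hx : x ∈ Ioo a b) :
    c ≤ f x :=
  le_of_tendsto hc <| mem_of_superset (Ioo_mem_nhdsGT hx.1) fun _ ht ↦
    hf ⟨ht.1, ht.2.trans hx.2⟩ hx ht.2.le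

theorem exists_first_nonpos {f : ℝ → ℝ} {a b z₀ : ℝ} (hf : ContinuousOn f (Ioo a b))
    (hpos : ∀ᶠ t in 𝓝[>] a, 0 < f t) (hz₀ : z₀ ∈ Ioo a b) (h : f z₀ ≤ 0) :
    ∃ z ∈ Ioo a b, f z ≤ 0 ∧ ∀ t ∈ Ioo a z, 0 < f t := by
  obtain ⟨δ, hδ, hδpos⟩ := mem_nhdsGT_iff_exists_Ioo_subset.1 hpos
  set S := {t ∈ Icc δ z₀ | f t ≤ 0}
  have hSsub : Icc δ z₀ ⊆ Ioo a b := Icc_subset_Ioo hδ hz₀.2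
  have hδz₀ : δ ≤ z₀ := by
    by_contra! h'
    exact (hδpos ⟨hz₀.1, h'⟩).not_ge h
  have hS : IsClosed S :=
    (hf.mono hSsub).preimage_isClosed_of_isClosed isClosed_Icc isClosed_Iic
  have hSne : S.Nonempty := ⟨z₀, ⟨hδz₀, le_rfl⟩, h⟩
  have hSbdd : BddBelow S := ⟨δ, fun _ ht ↦ ht.1.1⟩
  obtain ⟨hzI, hz⟩ := hS.csInf_mem hSne hSbdd
  refine ⟨sInf S, hSsub hzI, hz, fun t ht ↦ ?_⟩
  rcases lt_or_ge t δ with htδ | hδt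
  · exact hδpos ⟨ht.1, htδ⟩
  · by_contra! hft
    exact ht.2.not_ge (csInf_le hSbdd ⟨⟨hδt, ht.2.le.trans hzI.2⟩, hft⟩)

-- `U*'` for the singular steady state `U*(x) = c_p x ^ ((p - 2) / (p - 1))`
noncomputable def singularProfileDeriv (p x : ℝ) : ℝ := ((p - 1) * x) ^ (-(1 / (p - 1)))

section SingularProfile

variable {p a b : ℝ} {u u' : ℝ → ℝ}

theorem monotoneOn_sub_rpow_one_sub {s : Set ℝ} (hs : Convex ℝ s) (hp : 1 ≤ p)
    (hu : ∀ t ∈ s, HasDerivAt u (u' t) t) (hpos : ∀ t ∈ s, 0 < u t)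
    (hineq : ∀ t ∈ s, -u' t ≤ u t ^ p) :
    MonotoneOn (fun t ↦ (p - 1) * t - u t ^ (1 - p)) s := by
  have hderiv (t) (ht : t ∈ s) : HasDerivAt (fun t ↦ (p - 1) * t - u t ^ (1 - p))
      ((p - 1) * 1 - u' t * (1 - p) * u t ^ (1 - p - 1)) t :=
    ((hasDerivAt_id t).const_mul (p - 1)).sub ((hu t ht).rpow_const (.inl (hpos t ht).ne'))
  refine monotoneOn_of_hasDerivWithinAt_nonneg hs
    (fun t ht ↦ (hderiv t ht).continuousAt.continuousWithinAt)
    (fun t ht ↦ (hderiv t (interior_subset ht)).hasDerivWithinAt) fun t ht ↦ ?_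
  replace ht := interior_subset ht
  have hut := hpos t ht
  -- the derivative is `(p - 1) (1 + u' u ^ (-p))`, and `u' u ^ (-p) ≥ -1` is the inequality
  have hratio : -1 ≤ u' t * u t ^ (-p) := by
    have := mul_le_mul_of_nonneg_right (hineq t ht) (Real.rpow_pos_of_pos hut (-p)).le
    rw [← Real.rpow_add hut, add_neg_cancel, Real.rpow_zero, neg_mul] at this
    linarith
  rw [show 1 - p - 1 = -p by ring]
  nlinarith

theorem tendsto_sub_rpow_one_sub_nhdsGT_zero (hp : 1 < p) (hblow : Tendsto u (𝓝[>] 0) atTop) :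
    Tendsto (fun t ↦ (p - 1) * t - u t ^ (1 - p)) (𝓝[>] 0) (𝓝 0) := by
  have hlin : Tendsto (fun t : ℝ ↦ (p - 1) * t) (𝓝[>] 0) (𝓝 0) := by
    simpa using ((continuous_const_mul (p - 1)).tendsto 0).mono_left nhdsWithin_le_nhds
  have hpow : Tendsto (fun t ↦ u t ^ (1 - p)) (𝓝[>] 0) (𝓝 0) := by
    simpa [Function.comp_def] using
      (tendsto_rpow_neg_atTop (by linarith : 0 < p - 1)).comp hblow
  simpa using hlin.sub hpow

theorem singularProfileDeriv_pos (hp : 1 < p) {x : ℝ} (hx : 0 < x) :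
    0 < singularProfileDeriv p x :=
  Real.rpow_pos_of_pos (mul_pos (by linarith) hx) _

theorem continuousAt_singularProfileDeriv (hp : 1 < p) {x : ℝ} (hx : 0 < x) :
    ContinuousAt (singularProfileDeriv p) x :=
  (continuous_const_mul (p - 1)).continuousAt.rpow_const (.inl (mul_pos (by linarith) hx).ne')

theorem singularProfileDeriv_le_of_forall_pos (hp : 1 < p)
    (hu : ∀ t ∈ Ioo 0 b, HasDerivAt u (u' t) t)
    (hpos : ∀ t ∈ Ioo 0 b, 0 < u t) (hineq : ∀ t ∈ Ioo 0 b, -u' t ≤ u t ^ p)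
    (hblow : Tendsto u (𝓝[>] 0) atTop) {x : ℝ} (hx : x ∈ Ioo 0 b) :
    singularProfileDeriv p x ≤ u x := by
  have := (monotoneOn_sub_rpow_one_sub (convex_Ioo 0 b) hp.le hu hpos hineq)
    |>.le_of_tendsto_nhdsGT (tendsto_sub_rpow_one_sub_nhdsGT_zero hp hblow) hx
  exact rpow_neg_inv_le_of_rpow_neg_le (by linarith) (hpos x hx) (by simpa using this)

theorem pos_of_tendsto_atTop_of_neg_le_rpow (hp : 1 < p)
    (hu : ∀ t ∈ Ioo 0 a, HasDerivAt u (u' t) t)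
    (hineq : ∀ t ∈ Ioo 0 a, 0 < u t → -u' t ≤ u t ^ p)
    (hblow : Tendsto u (𝓝[>] 0) atTop) {x : ℝ} (hx : x ∈ Ioo 0 a) : 0 < u x := by
  by_contra! hux
  obtain ⟨z, hz, huz, hpos⟩ := exists_first_nonpos
    (fun t ht ↦ (hu t ht).continuousAt.continuousWithinAt) (hblow.eventually_gt_atTop 0) hx hux
  have hsub : Ioo 0 z ⊆ Ioo 0 a := Ioo_subset_Ioo_right hz.2.le
  have hbound : ∀ t ∈ Ioo 0 z, singularProfileDeriv p t ≤ u t := fun t ↦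
    singularProfileDeriv_le_of_forall_pos hp (fun t ht ↦ hu t (hsub ht)) hpos
      (fun t ht ↦ hineq t (hsub ht) (hpos t ht)) hblow
  have := (continuousAt_singularProfileDeriv hp hz.1).continuousWithinAt.closure_le
    (by rw [closure_Ioo hz.1.ne]; exact right_mem_Icc.2 hz.1.le)
    (hu z hz).continuousAt.continuousWithinAt hbound
  linarith [singularProfileDeriv_pos hp hz.1]

end SingularProfile

theorem deriv_ge_singular_profile_general (p a : ℝ) (hp : 2 < p)
    (v' v'' : ℝ → ℝ)
    (hv' : ∀ x ∈ Set.Ioo (0:ℝ) a, HasDerivAt v' (v'' x) x)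
    (hineq : ∀ x ∈ Set.Ioo (0:ℝ) a, 0 < v' x → -v'' x ≤ (v' x) ^ p)
    (hblow : Filter.Tendsto v' (nhdsWithin 0 (Set.Ioi 0)) Filter.atTop) :
    ∀ x ∈ Set.Ioo (0:ℝ) a, ((p - 1) * x) ^ (-(1 / (p - 1))) ≤ v' x := by
  have hp1 : 1 < p := by linarith
  have hpos : ∀ x ∈ Set.Ioo (0:ℝ) a, 0 < v' x := fun x ↦
    pos_of_tendsto_atTop_of_neg_le_rpow hp1 hv' hineq hblow
  exact fun x ↦ singularProfileDeriv_le_of_forall_pos hp1 hv' hpos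
    (fun t ht ↦ hineq t ht (hpos t ht)) hblow

/-- If `v` is `C²` on `(0,a)` with `-v'' ≤ (v')^p` wherever `v' > 0`, and
`v'(y) → +∞` as `y → 0⁺`, then `v' ≥ U*' = ((p-1)x)^{-1/(p-1)}` on `(0,a)`. -/
theorem deriv_ge_singular_profile (p a : ℝ) (hp : 2 < p) (ha : a ∈ Set.Ioo (0:ℝ) (1/2))
    (v v' v'' : ℝ → ℝ)
    (hv : ∀ x ∈ Set.Ioo (0:ℝ) a, HasDerivAt v (v' x) x)
    (hv' : ∀ x ∈ Set.Ioo (0:ℝ) a, HasDerivAt v' (v'' x) x)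
    (hineq : ∀ x ∈ Set.Ioo (0:ℝ) a, 0 < v' x → -v'' x ≤ (v' x) ^ p)
    (hblow : Filter.Tendsto v' (nhdsWithin 0 (Set.Ioi 0)) Filter.atTop) :
    ∀ x ∈ Set.Ioo (0:ℝ) a, ((p - 1) * x) ^ (-(1 / (p - 1))) ≤ v' x :=
  deriv_ge_singular_profile_general p a hp v' v'' hv' hineq hblow
end

section
/- Let 0 < X < Y < 1 and g ∈ C²([0,1]) with g(X) > 0, g(Y) > 0, and g'' > 0 on [X,Y]. Then there exists ḡ ∈ C²([0,1]) such that ḡ = g on [0,X] ∪ [Y,1], ḡ ≥ g on [X,Y], ḡ > 0 on [X,Y], and ḡ'' ≥ 0 on [X,Y]. -/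
open Set Topology Real
open scoped ContDiff

/-! Replace `g` on `[X, Y]` by `F ∘ g`, where `F = smoothRamp δ` with `δ = min (g X) (g Y) / 2` is a
smooth, nondecreasing, convex, positive majorant of the identity that coincides with it on `[δ, ∞)`.
Near `X` and `Y` we have `g > δ`, so `F ∘ g = g` there and the gluing is `C²`; on `[X, Y]`,
`(F ∘ g)'' = F''(g) g'² + F'(g) g'' ≥ 0`. -/

/-- The antiderivative of `t ↦ smoothTransition (t / δ)` normalized to be the identity on `[δ, ∞)`;
it is constant on `(-∞, 0]`. -/
noncomputable def smoothRamp (δ t : ℝ) : ℝ := t + ∫ s in t..δ, (1 - smoothTransition (s / δ))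

namespace smoothRamp

variable {δ t : ℝ}

theorem continuous_one_sub_smoothTransition_div (δ : ℝ) :
    Continuous fun s => 1 - smoothTransition (s / δ) := by
  fun_prop

theorem hasDerivAt (δ t : ℝ) : HasDerivAt (smoothRamp δ) (smoothTransition (t / δ)) t := by
  have hc := continuous_one_sub_smoothTransition_div δ
  exact ((hasDerivAt_id' t).add (intervalIntegral.integral_hasDerivAt_left
    (hc.intervalIntegrable t δ) (hc.stronglyMeasurableAtFilter _ _) hc.continuousAt)).congr_deriv
    (by ring)

theorem deriv_eq (δ : ℝ) : deriv (smoothRamp δ) = fun t => smoothTransition (t / δ) :=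
  funext fun t => (hasDerivAt δ t).deriv

theorem differentiable (δ : ℝ) : Differentiable ℝ (smoothRamp δ) :=
  fun t => (hasDerivAt δ t).differentiableAt

theorem contDiff {n : ℕ∞} (δ : ℝ) : ContDiff ℝ n (smoothRamp δ) := by
  refine ContDiff.of_le ?_ (WithTop.coe_le_coe.2 le_top)
  rw [contDiff_infty_iff_deriv, deriv_eq]
  exact ⟨differentiable δ, smoothTransition.contDiff.comp (contDiff_id.div_const δ)⟩

theorem monotone (δ : ℝ) : Monotone (smoothRamp δ) :=
  monotone_of_deriv_nonneg (differentiable δ) fun t => by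
    rw [deriv_eq]; exact smoothTransition.nonneg _

theorem monotone_deriv (hδ : 0 < δ) : Monotone (deriv (smoothRamp δ)) := by
  rw [deriv_eq]
  exact smoothTransition.monotone.comp fun a b hab => div_le_div_of_nonneg_right hab hδ.le

theorem eq_self_of_le (hδ : 0 < δ) (ht : δ ≤ t) : smoothRamp δ t = t := by
  rw [smoothRamp, intervalIntegral.integral_congr (g := fun _ => 0), intervalIntegral.integral_zero,
    add_zero]
  intro s hs
  rw [uIcc_of_ge ht] at hs
  simp [smoothTransition.one_of_one_le ((one_le_div hδ).2 hs.1)]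

theorem le_self (hδ : 0 < δ) (t : ℝ) : t ≤ smoothRamp δ t := by
  rcases le_total δ t with ht | ht
  · exact (eq_self_of_le hδ ht).ge
  · refine le_add_of_nonneg_right (intervalIntegral.integral_nonneg ht fun s _ => ?_)
    exact sub_nonneg.2 (smoothTransition.le_one _)

theorem pos (hδ : 0 < δ) (t : ℝ) : 0 < smoothRamp δ t := by
  have h0 : 0 < smoothRamp δ 0 := by
    rw [smoothRamp, zero_add]
    refine intervalIntegral.intervalIntegral_pos_of_pos_on
      ((continuous_one_sub_smoothTransition_div δ).intervalIntegrable 0 δ) (fun s hs => ?_) hδ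
    exact sub_pos.2 (smoothTransition.lt_one_of_lt_one ((div_lt_one hδ).2 hs.2))
  rcases le_or_gt t 0 with ht | ht
  · have hanti : AntitoneOn (smoothRamp δ) (Iic 0) := by
      refine antitoneOn_of_deriv_nonpos (convex_Iic 0) (differentiable δ).continuous.continuousOn
        (differentiable δ).differentiableOn fun s hs => ?_
      rw [interior_Iic] at hs
      simp only [deriv_eq]
      exact (smoothTransition.zero_of_nonpos (div_nonpos_of_nonpos_of_nonneg hs.le hδ.le)).le
    exact h0.trans_le (hanti ht self_mem_Iic ht)
  · exact ht.trans_le (le_self hδ t)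

theorem comp_eventuallyEq {α : Type*} [TopologicalSpace α] {g : α → ℝ} {s : Set α} {x : α}
    (hδ : 0 < δ) (hg : ContinuousWithinAt g s x) (hx : δ < g x) :
    smoothRamp δ ∘ g =ᶠ[𝓝[s] x] g :=
  (hg.eventually (lt_mem_nhds hx)).mono fun _ hy => eq_self_of_le hδ hy.le

end smoothRamp

theorem iteratedDerivWithin_two_comp {F g : ℝ → ℝ} {s : Set ℝ} {x : ℝ} (hs : UniqueDiffOn ℝ s)
    (hx : x ∈ s) (hF : ContDiff ℝ 2 F) (hg : ContDiffOn ℝ 2 g s) :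
    iteratedDerivWithin 2 (F ∘ g) s x =
      iteratedDeriv 2 F (g x) * derivWithin g s x ^ 2 +
        deriv F (g x) * iteratedDerivWithin 2 g s x := by
  have hg' : ∀ y ∈ s, HasDerivWithinAt g (derivWithin g s y) s y := fun y hy =>
    (hg.differentiableOn two_ne_zero y hy).hasDerivWithinAt
  have hFg' : EqOn (derivWithin (F ∘ g) s) (fun y => deriv F (g y) * derivWithin g s y) s :=
    fun y hy => (((hF.differentiable two_ne_zero) (g y)).hasDerivAt.comp_hasDerivWithinAt y
      (hg' y hy)).derivWithin (hs y hy)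
  have hF'' : HasDerivAt (deriv F) (iteratedDeriv 2 F (g x)) (g x) := by
    rw [iteratedDeriv_succ', iteratedDeriv_one]
    exact ((contDiff_succ_iff_deriv.1 hF).2.2.differentiable one_ne_zero (g x)).hasDerivAt
  have hg'' : HasDerivWithinAt (derivWithin g s) (iteratedDerivWithin 2 g s x) s x := by
    rw [iteratedDerivWithin_eq_iterate]
    exact ((hg.derivWithin hs one_add_one_eq_two.le).differentiableOn one_ne_zero x
      hx).hasDerivWithinAt
  rw [iteratedDerivWithin_eq_iterate, Function.iterate_succ_apply', Function.iterate_one,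
    derivWithin_congr hFg' (hFg' hx)]
  exact ((hF''.comp_hasDerivWithinAt x (hg' x hx)).mul hg'').derivWithin (hs x hx) |>.trans
    (by rw [Function.comp_apply]; ring)

theorem iteratedDerivWithin_two_comp_nonneg {F g : ℝ → ℝ} {s : Set ℝ} {x : ℝ}
    (hs : UniqueDiffOn ℝ s) (hx : x ∈ s) (hF : ContDiff ℝ 2 F) (hF_mono : Monotone F)
    (hF_conv : Monotone (deriv F)) (hg : ContDiffOn ℝ 2 g s)
    (hg_conv : 0 ≤ iteratedDerivWithin 2 g s x) : 0 ≤ iteratedDerivWithin 2 (F ∘ g) s x := by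
  rw [iteratedDerivWithin_two_comp hs hx hF hg, iteratedDeriv_succ', iteratedDeriv_one]
  exact add_nonneg (mul_nonneg hF_conv.deriv_nonneg (sq_nonneg _))
    (mul_nonneg hF_mono.deriv_nonneg hg_conv)

section Piecewise

variable {α β : Type*} [TopologicalSpace α] {A s : Set α} [∀ x, Decidable (x ∈ A)]
  {f₁ f₂ : α → β} {x : α}

theorem piecewise_eventuallyEq_of_mem_closure (hfr : ∀ x ∈ s ∩ frontier A, f₁ =ᶠ[𝓝[s] x] f₂)
    (hxs : x ∈ s) (hx : x ∈ closure A) : A.piecewise f₁ f₂ =ᶠ[𝓝[s] x] f₁ := by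
  by_cases hi : x ∈ interior A
  · filter_upwards [mem_nhdsWithin_of_mem_nhds (isOpen_interior.mem_nhds hi)] with y hy
    exact piecewise_eq_of_mem _ _ _ (interior_subset hy)
  · filter_upwards [hfr x ⟨hxs, hx, hi⟩] with y hy
    by_cases hyA : y ∈ A
    · exact piecewise_eq_of_mem _ _ _ hyA
    · rw [piecewise_eq_of_notMem _ _ _ hyA, hy]

theorem piecewise_eventuallyEq_of_notMem_closure (hx : x ∉ closure A) :
    A.piecewise f₁ f₂ =ᶠ[𝓝 x] f₂ := by
  filter_upwards [isClosed_closure.isOpen_compl.mem_nhds hx] with y hy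
  exact piecewise_eq_of_notMem _ _ _ fun hyA => hy (subset_closure hyA)

theorem ContDiffOn.piecewise_of_eventuallyEq_frontier {𝕜 E F : Type*} [NontriviallyNormedField 𝕜]
    [NormedAddCommGroup E] [NormedSpace 𝕜 E] [NormedAddCommGroup F] [NormedSpace 𝕜 F]
    {A s : Set E} [∀ x, Decidable (x ∈ A)] {f₁ f₂ : E → F} {n : WithTop ℕ∞}
    (h₁ : ContDiffOn 𝕜 n f₁ s) (h₂ : ContDiffOn 𝕜 n f₂ s)
    (hfr : ∀ x ∈ s ∩ frontier A, f₁ =ᶠ[𝓝[s] x] f₂) : ContDiffOn 𝕜 n (A.piecewise f₁ f₂) s := by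
  intro x hxs
  by_cases hx : x ∈ closure A
  · have h := piecewise_eventuallyEq_of_mem_closure hfr hxs hx
    exact (h₁ x hxs).congr_of_eventuallyEq h (h.eq_of_nhdsWithin hxs)
  · have h := piecewise_eventuallyEq_of_notMem_closure (f₁ := f₁) (f₂ := f₂) hx
    exact (h₂ x hxs).congr_of_eventuallyEq (nhdsWithin_le_nhds h) h.eq_of_nhds

theorem convexification_lemma_general (X Y : ℝ) (hX : 0 < X) (hY : Y < 1)
    (g : ℝ → ℝ) (hg : ContDiffOn ℝ 2 g (Set.Icc 0 1))
    (hgX : 0 < g X) (hgY : 0 < g Y)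
    (hconv : ∀ x ∈ Set.Icc X Y, 0 < iteratedDerivWithin 2 g (Set.Icc 0 1) x) :
    ∃ gbar : ℝ → ℝ, ContDiffOn ℝ 2 gbar (Set.Icc 0 1) ∧
      Set.EqOn gbar g (Set.Icc 0 X ∪ Set.Icc Y 1) ∧
      (∀ x ∈ Set.Icc X Y, g x ≤ gbar x) ∧
      (∀ x ∈ Set.Icc X Y, 0 < gbar x) ∧
      (∀ x ∈ Set.Icc X Y, 0 ≤ iteratedDerivWithin 2 gbar (Set.Icc 0 1) x) := by
  classical
  set δ := min (g X) (g Y) / 2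
  have hδ : 0 < δ := by positivity
  have hδ_end : ∀ x ∈ Icc X Y \ Ioo X Y, δ < g x := by
    intro x hx
    rw [Icc_sdiff_Ioo_same (nonempty_Icc.1 ⟨x, hx.1⟩)] at hx
    obtain rfl | rfl := hx
    exacts [(half_lt_self (lt_min hgX hgY)).trans_le (min_le_left _ _),
      (half_lt_self (lt_min hgX hgY)).trans_le (min_le_right _ _)]
  have hfr : ∀ x ∈ Icc 0 1 ∩ frontier (Icc X Y), smoothRamp δ ∘ g =ᶠ[𝓝[Icc 0 1] x] g := by
    rintro x ⟨hxs, hx⟩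
    rw [frontier, closure_Icc, interior_Icc] at hx
    exact smoothRamp.comp_eventuallyEq hδ (hg.continuousOn x hxs) (hδ_end x hx)
  refine ⟨(Icc X Y).piecewise (smoothRamp δ ∘ g) g,
    ((smoothRamp.contDiff δ).comp_contDiffOn hg).piecewise_of_eventuallyEq_frontier hg hfr,
    fun x hx => ?_, fun x hx => ?_, fun x hx => ?_, fun x hx => ?_⟩
  · by_cases hxXY : x ∈ Icc X Y
    · refine (piecewise_eq_of_mem _ _ _ hxXY).trans (smoothRamp.eq_self_of_le hδ ?_)
      refine (hδ_end x ⟨hxXY, fun h => ?_⟩).le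
      exact hx.elim (fun hx => h.1.not_ge hx.2) (fun hx => h.2.not_ge hx.1)
    · exact piecewise_eq_of_notMem _ _ _ hxXY
  · rw [piecewise_eq_of_mem _ _ _ hx]; exact smoothRamp.le_self hδ _
  · rw [piecewise_eq_of_mem _ _ _ hx]; exact smoothRamp.pos hδ _
  · have hxs : x ∈ Icc (0 : ℝ) 1 := Icc_subset_Icc hX.le hY.le hx
    have h := piecewise_eventuallyEq_of_mem_closure hfr hxs (subset_closure hx)
    rw [h.iteratedDerivWithin_eq (h.eq_of_nhdsWithin hxs)]
    exact iteratedDerivWithin_two_comp_nonneg (uniqueDiffOn_Icc one_pos) hxs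
      (smoothRamp.contDiff δ) (smoothRamp.monotone δ) (smoothRamp.monotone_deriv hδ)
      hg (hconv x hx).le

/-- Convexification lemma: given `g ∈ C²([0,1])` with `g(X), g(Y) > 0` and `g'' > 0`
on `[X,Y]`, there is `ḡ ∈ C²([0,1])` equal to `g` outside `(X,Y)`, and `≥ g`,
positive and convex (`ḡ'' ≥ 0`) on `[X,Y]`. -/
theorem convexification_lemma (X Y : ℝ) (hX : 0 < X) (hXY : X < Y) (hY : Y < 1)
    (g : ℝ → ℝ) (hg : ContDiffOn ℝ 2 g (Set.Icc 0 1))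
    (hgX : 0 < g X) (hgY : 0 < g Y)
    (hconv : ∀ x ∈ Set.Icc X Y, 0 < iteratedDerivWithin 2 g (Set.Icc 0 1) x) :
    ∃ gbar : ℝ → ℝ, ContDiffOn ℝ 2 gbar (Set.Icc 0 1) ∧
      Set.EqOn gbar g (Set.Icc 0 X ∪ Set.Icc Y 1) ∧
      (∀ x ∈ Set.Icc X Y, g x ≤ gbar x) ∧
      (∀ x ∈ Set.Icc X Y, 0 < gbar x) ∧
      (∀ x ∈ Set.Icc X Y, 0 ≤ iteratedDerivWithin 2 gbar (Set.Icc 0 1) x) :=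
  convexification_lemma_general X Y hX hY g hg hgX hgY hconv
end Piecewise
end

section
/- Let p > 2, α = (p-2)/(p-1). Suppose u : (0,1) × (t₁,t₂] → ℝ is C^{2,1}, W := u_x - U*' satisfies W ≤ Kx on Q := (0,a) × (t₁,t₂] for some a ∈ (0,1/2) and K > 0, and W ≤ 0 on the parabolic boundary Γ := ((0,a] × {t₁}) ∪ ({a} × (t₁,t₂]). Assume W satisfies on Q the equation W_t - W_xx = -[h(W + U*') - h(U*')]·(U*')^p, where h(s) = p|s|^{p-2}s and U*'(x) = ((p-1)x)^{-1/(p-1)}. Then W ≤ 0 on Q. -/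
open Set Filter Topology

/-- Maximum principle for `W = u_x - U*'`: if `W` satisfies the semilinear equation
`W_t - W_xx = -[h(W + U*') - h(U*')](U*')^p` with `h(s) = p|s|^{p-2}s`, is bounded
above by `Kx`, and is `≤ 0` on the parabolic boundary, then `W ≤ 0` on `Q`. -/
theorem max_principle_W (p a t₁ t₂ K : ℝ) (hp : 2 < p)
    (ha : a ∈ Set.Ioo (0:ℝ) (1/2)) (ht : t₁ < t₂) (hK : 0 < K)
    (W Wx Wxx Wt : ℝ → ℝ → ℝ)
    (hcont : ContinuousOn (fun q : ℝ × ℝ => W q.1 q.2) (Set.Ioc 0 a ×ˢ Set.Icc t₁ t₂))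
    (hWx : ∀ x ∈ Set.Ioo (0:ℝ) a, ∀ t ∈ Set.Ioc t₁ t₂, HasDerivAt (fun y => W y t) (Wx x t) x)
    (hWxx : ∀ x ∈ Set.Ioo (0:ℝ) a, ∀ t ∈ Set.Ioc t₁ t₂, HasDerivAt (fun y => Wx y t) (Wxx x t) x)
    (hWt : ∀ x ∈ Set.Ioo (0:ℝ) a, ∀ t ∈ Set.Ioc t₁ t₂, HasDerivAt (fun τ => W x τ) (Wt x t) t)
    (hbd : ∀ x ∈ Set.Ioo (0:ℝ) a, ∀ t ∈ Set.Ioc t₁ t₂, W x t ≤ K * x)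
    (hΓ₁ : ∀ x ∈ Set.Ioc (0:ℝ) a, W x t₁ ≤ 0)
    (hΓ₂ : ∀ t ∈ Set.Ioc t₁ t₂, W a t ≤ 0)
    (hPDE : ∀ x ∈ Set.Ioo (0:ℝ) a, ∀ t ∈ Set.Ioc t₁ t₂,
      Wt x t - Wxx x t =
        -((p * |W x t + ((p - 1) * x) ^ (-(1 / (p - 1)))| ^ (p - 2) *
              (W x t + ((p - 1) * x) ^ (-(1 / (p - 1)))) -
            p * |((p - 1) * x) ^ (-(1 / (p - 1)))| ^ (p - 2) *
              (((p - 1) * x) ^ (-(1 / (p - 1))))) *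
          (((p - 1) * x) ^ (-(1 / (p - 1)))) ^ p)) :
    ∀ x ∈ Set.Ioo (0:ℝ) a, ∀ t ∈ Set.Ioc t₁ t₂, W x t ≤ 0 := by
  intro x hx t htm
  by_contra hpos
  push_neg at hpos
  obtain ⟨hx0, hxa⟩ := hx
  obtain ⟨ht1, ht2⟩ := htm
  set M₀ := W x t with hM₀
  set δ : ℝ := min x (M₀ / (2*K)) with hδ
  have hδ0 : 0 < δ := lt_min hx0 (by positivity)
  have hδx : δ ≤ x := min_le_left _ _
  have hδa : δ < a := lt_of_le_of_lt hδx hxa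
  have hKδ : K * δ ≤ M₀ / 2 := by
    have h1 : K * δ ≤ K * (M₀ / (2*K)) :=
      mul_le_mul_of_nonneg_left (min_le_right _ _) hK.le
    have h2 : K * (M₀ / (2*K)) = M₀ / 2 := by
      field_simp
    linarith
  have hScpt : IsCompact (Icc δ a ×ˢ Icc t₁ t₂) := isCompact_Icc.prod isCompact_Icc
  have hsub : Icc δ a ×ˢ Icc t₁ t₂ ⊆ Ioc 0 a ×ˢ Icc t₁ t₂ := by
    rintro ⟨z, τ⟩ ⟨hz, hτ⟩
    exact ⟨⟨lt_of_lt_of_le hδ0 hz.1, hz.2⟩, hτ⟩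
  have hne : (Icc δ a ×ˢ Icc t₁ t₂).Nonempty :=
    ⟨(x, t), ⟨⟨hδx, hxa.le⟩, ⟨ht1.le, ht2⟩⟩⟩
  obtain ⟨⟨x₀, t₀⟩, hq₀, hmax⟩ := hScpt.exists_isMaxOn hne (hcont.mono hsub)
  obtain ⟨⟨hx₀l, hx₀r⟩, ht₀l, ht₀r⟩ := hq₀
  replace hx₀l : δ ≤ x₀ := hx₀l
  replace hx₀r : x₀ ≤ a := hx₀r
  replace ht₀l : t₁ ≤ t₀ := ht₀l
  replace ht₀r : t₀ ≤ t₂ := ht₀r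
  have hmax' : ∀ z ∈ Icc δ a, ∀ τ ∈ Icc t₁ t₂, W z τ ≤ W x₀ t₀ := by
    intro z hz τ hτ
    exact hmax (Set.mk_mem_prod hz hτ)
  have hMM : M₀ ≤ W x₀ t₀ := hmax' x ⟨hδx, hxa.le⟩ t ⟨ht1.le, ht2⟩
  have hMpos : 0 < W x₀ t₀ := lt_of_lt_of_le hpos hMM
  -- location of the max point
  have ht₀ : t₁ < t₀ := by
    rcases eq_or_lt_of_le ht₀l with h | h
    · exfalso
      have h0 : W x₀ t₀ ≤ 0 := by
        rw [← h]; exact hΓ₁ x₀ ⟨lt_of_lt_of_le hδ0 hx₀l, hx₀r⟩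
      linarith
    · exact h
  have hx₀a : x₀ < a := by
    rcases eq_or_lt_of_le hx₀r with h | h
    · exfalso
      have h0 : W x₀ t₀ ≤ 0 := by rw [h]; exact hΓ₂ t₀ ⟨ht₀, ht₀r⟩
      linarith
    · exact h
  have hx₀δ : δ < x₀ := by
    rcases eq_or_lt_of_le hx₀l with h | h
    · exfalso
      have h0 : W x₀ t₀ ≤ K * x₀ :=
        hbd x₀ ⟨lt_of_lt_of_le hδ0 hx₀l, hx₀a⟩ t₀ ⟨ht₀, ht₀r⟩
      have hKeq : K * x₀ ≤ K * δ := mul_le_mul_of_nonneg_left (le_of_eq h.symm) hK.le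
      linarith
    · exact h
  have hx₀ : x₀ ∈ Ioo (0:ℝ) a := ⟨hδ0.trans hx₀δ, hx₀a⟩
  have ht₀m : t₀ ∈ Ioc t₁ t₂ := ⟨ht₀, ht₀r⟩
  -- time derivative is nonneg at the max
  have hWt0 : 0 ≤ Wt x₀ t₀ := by
    have hslope := hasDerivAt_iff_tendsto_slope.mp (hWt x₀ hx₀ t₀ ht₀m)
    have hmono : 𝓝[<] t₀ ≤ 𝓝[≠] t₀ :=
      nhdsWithin_mono _ (fun y hy => ne_of_lt hy)
    refine ge_of_tendsto (hslope.mono_left hmono) ?_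
    filter_upwards [Ioo_mem_nhdsLT_of_mem (⟨ht₀, le_refl t₀⟩ : t₀ ∈ Ioc t₁ t₀)] with τ hτ
    have hWτ : W x₀ τ ≤ W x₀ t₀ :=
      hmax' x₀ ⟨hx₀δ.le, hx₀a.le⟩ τ ⟨hτ.1.le, hτ.2.le.trans ht₀r⟩
    rw [slope_def_field]
    exact div_nonneg_of_nonpos (by linarith) (by linarith [hτ.2])
  -- the nonlinear term is strictly positive at the max
  set c : ℝ := ((p - 1) * x₀) ^ (-(1 / (p - 1))) with hc
  have hcpos : 0 < c := Real.rpow_pos_of_pos (mul_pos (by linarith) hx₀.1) _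
  have hcp : 0 < c ^ p := Real.rpow_pos_of_pos hcpos p
  have hbracket :
      0 < p * |W x₀ t₀ + c| ^ (p - 2) * (W x₀ t₀ + c) - p * |c| ^ (p - 2) * c := by
    have h1 : (0:ℝ) < W x₀ t₀ + c := by linarith
    rw [abs_of_pos h1, abs_of_pos hcpos]
    have e1 : (W x₀ t₀ + c) ^ (p - 2) * (W x₀ t₀ + c) = (W x₀ t₀ + c) ^ (p - 1) := by
      rw [show p - 1 = p - 2 + 1 by ring, Real.rpow_add_one (ne_of_gt h1), ]
    have e2 : c ^ (p - 2) * c = c ^ (p - 1) := by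
      rw [show p - 1 = p - 2 + 1 by ring, Real.rpow_add_one (ne_of_gt hcpos)]
    rw [mul_assoc, mul_assoc, e1, e2]
    have hlt : c ^ (p - 1) < (W x₀ t₀ + c) ^ (p - 1) :=
      Real.rpow_lt_rpow hcpos.le (by linarith) (by linarith)
    have := mul_lt_mul_of_pos_left hlt (show (0:ℝ) < p by linarith)
    linarith
  have hpde := hPDE x₀ hx₀ t₀ ht₀m
  rw [← hc] at hpde
  have hWxxpos : 0 < Wxx x₀ t₀ := by
    have hneg : Wt x₀ t₀ - Wxx x₀ t₀ < 0 := by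
      rw [hpde]
      exact neg_lt_zero.mpr (mul_pos hbracket hcp)
    linarith
  -- spatial derivative vanishes at the max
  have hloc : IsLocalMax (fun y => W y t₀) x₀ := by
    have hIoo : Ioo δ a ∈ 𝓝 x₀ := isOpen_Ioo.mem_nhds ⟨hx₀δ, hx₀a⟩
    filter_upwards [hIoo] with y hy
    exact hmax' y ⟨hy.1.le, hy.2.le⟩ t₀ ⟨ht₀l, ht₀r⟩
  have hWx0 : Wx x₀ t₀ = 0 := hloc.hasDerivAt_eq_zero (hWx x₀ hx₀ t₀ ht₀m)
  -- Wx is positive just to the right of x₀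
  have hslope2 := hasDerivAt_iff_tendsto_slope.mp (hWxx x₀ hx₀ t₀ ht₀m)
  have hmono2 : 𝓝[>] x₀ ≤ 𝓝[≠] x₀ :=
    nhdsWithin_mono _ (fun y hy => ne_of_gt hy)
  have hev : ∀ᶠ y in 𝓝[>] x₀, 0 < Wx y t₀ ∧ y < a := by
    have h1 : ∀ᶠ y in 𝓝[>] x₀, 0 < slope (fun y => Wx y t₀) x₀ y :=
      (hslope2.mono_left hmono2).eventually_const_lt hWxxpos
    have h2 : ∀ᶠ y in 𝓝[>] x₀, y < a :=
      (eventually_lt_nhds hx₀a).filter_mono nhdsWithin_le_nhds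
    filter_upwards [h1, h2, self_mem_nhdsWithin] with y hy hy2 hy3
    refine ⟨?_, hy2⟩
    rw [slope_def_field, hWx0, sub_zero] at hy
    rcases div_pos_iff.mp hy with ⟨h, _⟩ | ⟨_, h⟩
    · exact h
    · exfalso; have : x₀ < y := hy3; linarith
  obtain ⟨u, hu, hsub2⟩ := mem_nhdsGT_iff_exists_Ioo_subset.mp hev
  set y := (x₀ + min u a) / 2 with hy
  have hmin : x₀ < min u a := lt_min hu hx₀a
  have hxy : x₀ < y := by rw [hy]; linarith
  have hyu : y < u := by
    have : y < min u a := by rw [hy]; linarith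
    exact lt_of_lt_of_le this (min_le_left _ _)
  have hyIoo : y ∈ Ioo x₀ u := ⟨hxy, hyu⟩
  have hya : y < a := (hsub2 hyIoo).2
  -- mean value theorem on [x₀, y]
  have hcontW : ContinuousOn (fun z => W z t₀) (Icc x₀ y) := by
    have hcm : ContinuousOn (fun z : ℝ => ((z, t₀) : ℝ × ℝ)) (Icc x₀ y) :=
      (continuous_id.prodMk continuous_const).continuousOn
    have hmaps : MapsTo (fun z : ℝ => ((z, t₀) : ℝ × ℝ)) (Icc x₀ y)
        (Ioc 0 a ×ˢ Icc t₁ t₂) := by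
      intro z hz
      exact ⟨⟨lt_of_lt_of_le hx₀.1 hz.1, (hz.2.trans hya.le)⟩, ⟨ht₀l, ht₀r⟩⟩
    exact hcont.comp hcm hmaps
  obtain ⟨ξ, hξ, hslopeEq⟩ :=
    exists_hasDerivAt_eq_slope (fun z => W z t₀) (fun z => Wx z t₀) hxy hcontW
      (fun z hz => hWx z ⟨hx₀.1.trans hz.1, hz.2.trans hya⟩ t₀ ht₀m)
  have hWy : W y t₀ ≤ W x₀ t₀ :=
    hmax' y ⟨(hx₀δ.trans hxy).le, hya.le⟩ t₀ ⟨ht₀l, ht₀r⟩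
  have hpos' : 0 < Wx ξ t₀ := (hsub2 ⟨hξ.1, hξ.2.trans hyu⟩).1
  rw [hslopeEq] at hpos'
  rcases div_pos_iff.mp hpos' with ⟨h1, _⟩ | ⟨_, h2⟩ <;> linarith
end
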